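/- For the voter model QSD on the star graph K_{n,1} (n ≥ 3), the probability under the QSD that exactly one leaf says 'yes' and the center says 'no' is μ_{n,1}(1,0) = 1 - √(1/2 - 1/(2n)) = γ_{n,1}/2, where γ_{n,1} = 2(1 - √(1 - 1/(2n) - 1/2)). -/
import Mathlib


/-- `μ` together with eigenvalue `l` is the (unique) quasi-stationary distribution of the
2-opinion voter model on the complete bipartite graph `K_{n,m}`, tracked by the pair
`(k,h)` of 'yes' counts in the parts of sizes `n` and `m`.  `μ` is extended by `0` outside
the grid `{0,…,n}×{0,…,m}`; the absorbing states `(0,0),(n,m)` and the unreachable states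
`(0,m),(n,0)` carry zero mass; `μ` is a probability vector satisfying the left-eigenvector
equation with eigenvalue `l`, and is invariant under relabeling of the two opinions. -/
structure IsBipartiteVoterQSD (n m : ℕ) (μ : ℤ → ℤ → ℝ) (l : ℝ) : Prop where
  nonneg : ∀ k h : ℤ, 0 ≤ μ k h
  zero_outside : ∀ k h : ℤ, (k < 0 ∨ (n : ℤ) < k ∨ h < 0 ∨ (m : ℤ) < h) → μ k h = 0
  zero_corner₁ : μ 0 0 = 0
  zero_corner₂ : μ n m = 0
  zero_bp₁ : μ 0 m = 0
  zero_bp₂ : μ n 0 = 0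
  sum_one : ∑ k ∈ Finset.Icc (0 : ℤ) n, ∑ h ∈ Finset.Icc (0 : ℤ) m, μ k h = 1
  symm : ∀ k h : ℤ, μ k h = μ (n - k) (m - h)
  eigen : ∀ k h : ℤ, 0 ≤ k → k ≤ n → 0 ≤ h → h ≤ m →
    ¬(k = 0 ∧ h = 0) → ¬(k = n ∧ h = m) →
    l * μ k h
      = μ k h * (((k : ℝ) * h + ((n : ℝ) - k) * ((m : ℝ) - h)) / ((n : ℝ) * m))
        + μ (k - 1) h * ((((n : ℝ) - k + 1) * h) / ((m : ℝ) * ((n : ℝ) + m)))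
        + μ (k + 1) h * ((((k : ℝ) + 1) * ((m : ℝ) - h)) / ((m : ℝ) * ((n : ℝ) + m)))
        + μ k (h - 1) * ((((m : ℝ) - h + 1) * k) / ((n : ℝ) * ((n : ℝ) + m)))
        + μ k (h + 1) * ((((h : ℝ) + 1) * ((n : ℝ) - k)) / ((n : ℝ) * ((n : ℝ) + m)))


private lemma star_sum_shift_up (n : ℤ) (hn : 0 ≤ n) (f : ℤ → ℝ)
    (h0 : f 0 = 0) (htop : f (n + 1) = 0) :
    ∑ k ∈ Finset.Icc (0 : ℤ) n, f (k + 1) = ∑ k ∈ Finset.Icc (0 : ℤ) n, f k := by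
  have h1 : Finset.Icc (0:ℤ) n = insert 0 (Finset.Icc 1 n) := by
    ext x; simp [Finset.mem_Icc]; omega
  have h2 : Finset.Icc ((0:ℤ)+1) (n+1) = insert (n+1) (Finset.Icc 1 n) := by
    ext x; simp [Finset.mem_Icc]; omega
  have hmap : ∑ k ∈ Finset.Icc (0:ℤ) n, f (k+1) = ∑ k ∈ Finset.Icc ((0:ℤ)+1) (n+1), f k := by
    rw [← Finset.map_add_right_Icc, Finset.sum_map]
    rfl
  rw [hmap, h2, Finset.sum_insert (by simp [Finset.mem_Icc]),
    h1, Finset.sum_insert (by simp), h0, htop]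

private lemma star_sum_shift_down (n : ℤ) (hn : 0 ≤ n) (f : ℤ → ℝ)
    (h0 : f (-1) = 0) (htop : f n = 0) :
    ∑ k ∈ Finset.Icc (0 : ℤ) n, f (k - 1) = ∑ k ∈ Finset.Icc (0 : ℤ) n, f k := by
  have h1 : Finset.Icc (0:ℤ) n = insert n (Finset.Icc 0 (n-1)) := by
    ext x; simp [Finset.mem_Icc]; omega
  have h2 : Finset.Icc ((0:ℤ) + -1) (n + -1) = insert (-1) (Finset.Icc 0 (n-1)) := by
    ext x; simp [Finset.mem_Icc]; omega
  have hmap : ∑ k ∈ Finset.Icc (0:ℤ) n, f (k-1) = ∑ k ∈ Finset.Icc ((0:ℤ) + -1) (n + -1), f k := by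
    rw [← Finset.map_add_right_Icc, Finset.sum_map]
    refine Finset.sum_congr rfl fun k _ => ?_
    simp [sub_eq_add_neg]
  rw [hmap, h2, Finset.sum_insert (by simp), h1,
    Finset.sum_insert (by simp [Finset.mem_Icc]), h0, htop]

/-- For the star graph `K_{n,1}` (`n ≥ 3`), the QSD probability that exactly one leaf says
'yes' and the center says 'no' is `μ_{n,1}(1,0) = 1 - √(1/2 - 1/(2n)) = γ_{n,1}/2` where
`γ_{n,1} = 2(1 - √(1 - 1/(2n) - 1/2))`. -/
theorem star_qsd_one_dissenter (n : ℕ) (hn : 3 ≤ n) (μ : ℤ → ℤ → ℝ)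
    (hμ : IsBipartiteVoterQSD n 1 μ
      (1 - (2 * (1 - Real.sqrt (1 - 1 / (2 * (n : ℝ)) - 1 / 2))) / ((n : ℝ) + 1))) :
    μ 1 0 = 1 - Real.sqrt (1 / 2 - 1 / (2 * (n : ℝ))) ∧
    μ 1 0 = (2 * (1 - Real.sqrt (1 - 1 / (2 * (n : ℝ)) - 1 / 2))) / 2 := by
  set s : ℝ := Real.sqrt (1 - 1 / (2 * (n : ℝ)) - 1 / 2) with hs
  set l : ℝ := 1 - (2 * (1 - s)) / ((n : ℝ) + 1) with hl
  have hn3 : (3:ℝ) ≤ (n:ℝ) := by exact_mod_cast hn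
  have hN0 : (0:ℝ) < (n:ℝ) := by linarith
  have hN1 : (0:ℝ) < (n:ℝ) + 1 := by linarith
  have hNne : (n:ℝ) ≠ 0 := ne_of_gt hN0
  have hN1ne : (n:ℝ) + 1 ≠ 0 := ne_of_gt hN1
  -- zero facts
  have z00 : μ 0 0 = 0 := hμ.zero_corner₁
  have zn1 : μ (n:ℤ) 1 = 0 := by simpa using hμ.zero_corner₂
  have z01 : μ 0 1 = 0 := by simpa using hμ.zero_bp₁
  have zn0 : μ (n:ℤ) 0 = 0 := hμ.zero_bp₂
  have hzm1 : ∀ k : ℤ, μ k (-1) = 0 := fun k =>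
    hμ.zero_outside k (-1) (by right; right; left; norm_num)
  have hz2 : ∀ k : ℤ, μ k 2 = 0 := fun k =>
    hμ.zero_outside k 2 (by right; right; right; norm_num)
  have hzkm1 : μ (-1) 1 = 0 := hμ.zero_outside (-1) 1 (by left; norm_num)
  have hzkn1 : μ ((n:ℤ)+1) 0 = 0 := hμ.zero_outside _ 0 (by right; left; omega)
  -- total mass as single sum
  have hIcc01 : Finset.Icc (0:ℤ) 1 = {0, 1} := by decide
  have hsum : ∑ k ∈ Finset.Icc (0:ℤ) (n:ℤ), (μ k 0 + μ k 1) = 1 := by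
    have h := hμ.sum_one
    simp only [Nat.cast_one, hIcc01] at h
    rw [← h]
    refine Finset.sum_congr rfl fun k _ => ?_
    rw [Finset.sum_pair (by norm_num : (0:ℤ) ≠ 1)]
  -- the "incoming mass" function
  set R : ℤ → ℝ := fun k =>
    μ k 0 * (((n:ℝ) - k)/(n:ℝ)) + μ (k+1) 0 * (((k:ℝ)+1)/((n:ℝ)+1))
      + μ k 1 * (((n:ℝ) - k)/((n:ℝ)*((n:ℝ)+1)))
      + μ k 1 * ((k:ℝ)/(n:ℝ)) + μ (k-1) 1 * (((n:ℝ) - k + 1)/((n:ℝ)+1))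
      + μ k 0 * ((k:ℝ)/((n:ℝ)*((n:ℝ)+1))) with hR
  have hA : ∀ k ∈ Finset.Icc (0:ℤ) (n:ℤ),
      l * (μ k 0 + μ k 1)
        = R k - ((if k = 0 then μ 1 0 / ((n:ℝ)+1) else 0)
            + (if k = (n:ℤ) then μ ((n:ℤ)-1) 1 / ((n:ℝ)+1) else 0)) := by
    intro k hk
    rw [Finset.mem_Icc] at hk
    obtain ⟨hk0, hkn⟩ := hk
    rcases eq_or_ne k 0 with rfl | hne0
    · have hne : (0:ℤ) ≠ (n:ℤ) := by omega
      simp only [if_pos rfl, if_neg hne, hR]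
      norm_num [z00, z01, hzkm1]
      push_cast
      ring
    · rcases eq_or_ne k (n:ℤ) with rfl | hnen
      · simp only [if_neg hne0, if_pos rfl, hR]
        rw [zn0, zn1, hzkn1]
        push_cast
        ring
      · simp only [if_neg hne0, if_neg hnen, hR]
        have e0 := hμ.eigen k 0 hk0 hkn le_rfl (by norm_num)
          (by simp [hne0]) (by simp [hnen])
        have e1 := hμ.eigen k 1 hk0 hkn zero_le_one (by norm_num)
          (by norm_num) (by simp [hnen])
        norm_num at e0 e1
        rw [hzm1 k] at e0
        rw [hz2 k] at e1
        rw [mul_add, e0, e1]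
        push_cast
        ring
  -- sum of R equals total mass
  have hRsum : ∑ k ∈ Finset.Icc (0:ℤ) (n:ℤ), R k
      = ∑ k ∈ Finset.Icc (0:ℤ) (n:ℤ), (μ k 0 + μ k 1) := by
    have hshift1 : ∑ k ∈ Finset.Icc (0:ℤ) (n:ℤ), μ (k+1) 0 * (((k:ℝ)+1)/((n:ℝ)+1))
        = ∑ k ∈ Finset.Icc (0:ℤ) (n:ℤ), μ k 0 * ((k:ℝ)/((n:ℝ)+1)) := by
      have := star_sum_shift_up (n:ℤ) (by positivity) (fun j => μ j 0 * ((j:ℝ)/((n:ℝ)+1)))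
        (by simp) (by simp [hzkn1])
      rw [← this]
      refine Finset.sum_congr rfl fun k _ => ?_
      push_cast
      ring
    have hshift2 : ∑ k ∈ Finset.Icc (0:ℤ) (n:ℤ), μ (k-1) 1 * (((n:ℝ) - k + 1)/((n:ℝ)+1))
        = ∑ k ∈ Finset.Icc (0:ℤ) (n:ℤ), μ k 1 * (((n:ℝ) - k)/((n:ℝ)+1)) := by
      have := star_sum_shift_down (n:ℤ) (by positivity) (fun j => μ j 1 * (((n:ℝ) - j)/((n:ℝ)+1)))
        (by simp [hzkm1]) (by simp [zn1])
      rw [← this]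
      refine Finset.sum_congr rfl fun k _ => ?_
      push_cast
      ring
    simp only [hR]
    rw [Finset.sum_add_distrib, Finset.sum_add_distrib, Finset.sum_add_distrib,
      Finset.sum_add_distrib, Finset.sum_add_distrib, hshift1, hshift2,
      ← Finset.sum_add_distrib, ← Finset.sum_add_distrib, ← Finset.sum_add_distrib,
      ← Finset.sum_add_distrib, ← Finset.sum_add_distrib]
    refine Finset.sum_congr rfl fun k _ => ?_
    field_simp
    ring
  -- main identity
  have hmain : l = 1 - (μ 1 0 + μ ((n:ℤ)-1) 1) / ((n:ℝ)+1) := by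
    have h1 : ∑ k ∈ Finset.Icc (0:ℤ) (n:ℤ), l * (μ k 0 + μ k 1) = l := by
      rw [← Finset.mul_sum, hsum, mul_one]
    rw [← h1, Finset.sum_congr rfl hA, Finset.sum_sub_distrib, hRsum, hsum,
      Finset.sum_add_distrib]
    have hm0 : (0:ℤ) ∈ Finset.Icc (0:ℤ) (n:ℤ) := by simp
    have hmn : (n:ℤ) ∈ Finset.Icc (0:ℤ) (n:ℤ) := by simp
    rw [Finset.sum_ite_eq' _ (0:ℤ) (fun _ => μ 1 0 / ((n:ℝ)+1)), if_pos hm0,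
      Finset.sum_ite_eq' _ ((n:ℤ)) (fun _ => μ ((n:ℤ)-1) 1 / ((n:ℝ)+1)), if_pos hmn]
    ring
  have hsymm : μ ((n:ℤ)-1) 1 = μ 1 0 := by
    have h := hμ.symm ((n:ℤ)-1) 1
    rw [show (n:ℤ) - ((n:ℤ)-1) = 1 by ring] at h
    simpa using h
  have key : μ 1 0 = 1 - s := by
    rw [hsymm] at hmain
    rw [hl] at hmain
    field_simp at hmain
    linarith
  refine ⟨?_, ?_⟩
  · rw [key, hs, show (1:ℝ) - 1 / (2 * (n:ℝ)) - 1/2 = 1/2 - 1/(2*(n:ℝ)) by ring]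
  · rw [key]; ring
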